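/- arXiv:1503.00187 — 2 statements merged into one kernel-verified Lean document; each statement's English description precedes it below -/
import Mathlib

section
/- If two continuous maps f, g from a compact smooth manifold N of dimension n-1 into S^{n-1} have different degrees mod 2, then there exists a point x ∈ N with f(x) = g(x). -/
/-!
If `f` and `g` had no coincidence, then `f x` and `-g x` would never be antipodal, so the
normalized straight-line homotopy from `f` to `-g` stays on the sphere. Hence
`deg f = deg (-g) = deg g`.
-/

open Metric unitInterval

section

variable {X E : Type*} [TopologicalSpace X] [NormedAddCommGroup E] [NormedSpace ℝ E]

theorem zero_notMem_segment_of_norm_eq_of_ne_neg {u v : E} (hnorm : ‖u‖ = ‖v‖)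
    (hne : u ≠ -v) : (0 : E) ∉ segment ℝ u v := by
  rw [mem_segment_iff_sameRay, zero_sub, sub_zero]
  exact fun h => hne <| neg_eq_iff_eq_neg.mp <| h.eq_of_norm_eq <| by rwa [norm_neg]

theorem ContinuousMap.homotopic_of_forall_ne_neg {f g : C(X, sphere (0 : E) 1)}
    (h : ∀ x, f x ≠ -g x) : f.Homotopic g := by
  let F : C(I × X, E) := ⟨fun p => AffineMap.lineMap (f p.2 : E) (g p.2) (p.1 : ℝ), by fun_prop⟩
  have hF : ∀ p, F p ≠ 0 := fun p hp =>
    zero_notMem_segment_of_norm_eq_of_ne_neg (by simp) (fun he => h p.2 (Subtype.ext he)) <|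
      hp.subst (motive := (· ∈ segment ℝ _ _)) (lineMap_mem_segment ℝ _ _ p.1.2)
  refine ⟨{ toFun := fun p => ⟨‖F p‖⁻¹ • F p, by simp [norm_smul, hF p]⟩
            continuous_toFun := ?_
            map_zero_left := fun x => ?_
            map_one_left := fun x => ?_ }⟩
  · exact ((map_continuous F).norm.inv₀ fun p => norm_ne_zero_iff.mpr (hF p)).smul
      (map_continuous F) |>.subtype_mk _
  · ext1; simp [F]
  · ext1; simp [F]

end

theorem exists_coincidence_of_degree_ne_general
    {n : ℕ} {N : Type*} [TopologicalSpace N]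
    (deg : C(N, Metric.sphere (0 : EuclideanSpace ℝ (Fin n)) 1) → ZMod 2)
    (deg_homotopy_invariant : ∀ f g, f.Homotopic g → deg f = deg g)
    (deg_antipodal : ∀ g : C(N, Metric.sphere (0 : EuclideanSpace ℝ (Fin n)) 1),
      deg ⟨fun x => -(g x), (continuous_neg.comp g.continuous)⟩ = deg g)
    (f g : C(N, Metric.sphere (0 : EuclideanSpace ℝ (Fin n)) 1))
    (hdeg : deg f ≠ deg g) :
    ∃ x : N, f x = g x := by
  by_contra! hfg
  have hf_homotopic : f.Homotopic ⟨fun x => -(g x), continuous_neg.comp g.continuous⟩ :=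
    ContinuousMap.homotopic_of_forall_ne_neg fun x => by simpa using hfg x
  exact hdeg ((deg_homotopy_invariant _ _ hf_homotopic).trans (deg_antipodal g))

/-- The coincidence property (mod 2) of the sphere: if `N` is a compact manifold
of dimension `n-1` and `f, g : N → S^{n-1}` are continuous maps with different
degrees mod 2, then `f` and `g` have a coincidence point.  The degree mod 2 is
formalized as any `ZMod 2`-valued invariant `deg` of continuous maps
`N → S^{n-1}` which is homotopy invariant and satisfies
`deg (σ ∘ g) = deg σ * deg g` where the antipodal map `σ` has degree 1
(equivalently, `deg (σ ∘ g) = deg g`). -/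
theorem exists_coincidence_of_degree_ne
    {n : ℕ} {N : Type*} [TopologicalSpace N] [CompactSpace N]
    [ChartedSpace (EuclideanSpace ℝ (Fin (n - 1))) N]
    (deg : C(N, Metric.sphere (0 : EuclideanSpace ℝ (Fin n)) 1) → ZMod 2)
    (deg_homotopy_invariant : ∀ f g, f.Homotopic g → deg f = deg g)
    (deg_antipodal : ∀ g : C(N, Metric.sphere (0 : EuclideanSpace ℝ (Fin n)) 1),
      deg ⟨fun x => -(g x), (continuous_neg.comp g.continuous)⟩ = deg g)
    (f g : C(N, Metric.sphere (0 : EuclideanSpace ℝ (Fin n)) 1))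
    (hdeg : deg f ≠ deg g) :
    ∃ x : N, f x = g x :=
  exists_coincidence_of_degree_ne_general deg deg_homotopy_invariant deg_antipodal f g hdeg
end

section
/- Let f : ℝ → ℝ be continuous with f(0) < 0 and f(T) < 0 for some T > 0, and suppose Z = {t ∈ (0,T) : f(t) = 0} is finite and f changes sign at each point of Z. Then Z has an even number of elements. -/
/-!
Induction on the largest zero `m` in `(a, b)`: `f` has no zeros in `(m, b]`, nor in `[l, m)` for
`l < m` above all other zeros, so crossing `m` flips the sign between `f l` and `f b`. Hence the
number of crossings is even exactly when `f a` and `f b` have the same sign.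
-/

open Set

def SignChangesAt (f : ℝ → ℝ) (t₀ : ℝ) : Prop :=
  ∃ δ > (0 : ℝ), ∀ s s', t₀ - δ < s → s < t₀ → t₀ < s' → s' < t₀ + δ → f s * f s' < 0

section SignAlgebra

variable {α : Type*} [CommRing α] [LinearOrder α] [IsStrictOrderedRing α] {x y z : α}

lemma mul_neg_of_mul_pos_of_mul_neg (hxy : 0 < x * y) (hyz : y * z < 0) : x * z < 0 := by
  nlinarith [sq_nonneg y, mul_pos hxy (neg_pos.2 hyz)]

lemma not_pos_mul_iff_of_mul_neg (hx : x ≠ 0) (hyz : y * z < 0) :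
    ¬ 0 < x * y ↔ 0 < x * z := by
  rcases hx.lt_or_gt with hx | hx <;> rcases mul_neg_iff.1 hyz with ⟨hy, hz⟩ | ⟨hy, hz⟩ <;>
    simp [mul_pos_iff, hx, hy, hz, hx.not_gt, hy.not_gt, hz.not_gt]

end SignAlgebra

lemma zero_lt_mul_of_forall_ne_zero {f : ℝ → ℝ} {x y : ℝ} (hxy : x ≤ y)
    (hf : ContinuousOn f (Icc x y)) (h : ∀ t ∈ Icc x y, f t ≠ 0) : 0 < f x * f y := by
  by_contra! hle
  have h0 : (0 : ℝ) ∈ uIcc (f x) (f y) := by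
    rcases mul_nonpos_iff.1 hle with ⟨h1, h2⟩ | ⟨h1, h2⟩
    · exact mem_uIcc.2 (Or.inr ⟨h2, h1⟩)
    · exact mem_uIcc.2 (Or.inl ⟨h1, h2⟩)
  rw [← uIcc_of_le hxy] at hf h
  obtain ⟨t, ht, hft⟩ := intermediate_value_uIcc hf h0
  exact h t ht hft

lemma SignChangesAt.mul_neg {f : ℝ → ℝ} {t₀ l r : ℝ} (h : SignChangesAt f t₀)
    (hf : Continuous f) (hl : l < t₀) (hr : t₀ < r)
    (hL : ∀ t ∈ Ico l t₀, f t ≠ 0) (hR : ∀ t ∈ Ioc t₀ r, f t ≠ 0) : f l * f r < 0 := by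
  obtain ⟨δ, hδ, hδf⟩ := h
  obtain ⟨s, hs, hst₀⟩ := exists_between (max_lt hl (sub_lt_self t₀ hδ))
  obtain ⟨s', hts', hs'⟩ := exists_between (lt_min hr (lt_add_of_pos_right t₀ hδ))
  rw [max_lt_iff] at hs
  rw [lt_min_iff] at hs'
  have hls : 0 < f l * f s := zero_lt_mul_of_forall_ne_zero hs.1.le hf.continuousOn
    fun t ht ↦ hL t ⟨ht.1, ht.2.trans_lt hst₀⟩
  have hs'r : 0 < f s' * f r := zero_lt_mul_of_forall_ne_zero hs'.1.le hf.continuousOn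
    fun t ht ↦ hR t ⟨hts'.trans_le ht.1, ht.2⟩
  have hss' : f s * f s' < 0 := hδf s s' hs.2 hst₀ hts' hs'.2
  nlinarith [mul_neg_of_mul_pos_of_mul_neg hls hss', mul_pos hls hs'r]

theorem even_card_zeros_iff_zero_lt_mul {f : ℝ → ℝ} (hf : Continuous f) {a : ℝ} (ha : f a ≠ 0)
    (s : Finset ℝ) : ∀ b, a < b → f b ≠ 0 → {t ∈ Ioo a b | f t = 0} = ↑s →
      (∀ t ∈ s, SignChangesAt f t) → (Even s.card ↔ 0 < f a * f b) := by
  induction s using Finset.induction_on_max with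
  | empty =>
    intro b hab hb hZ _
    refine iff_of_true (by simp) (zero_lt_mul_of_forall_ne_zero hab.le hf.continuousOn ?_)
    rintro t ⟨hat, htb⟩ hft
    rcases hat.eq_or_lt with rfl | hat
    · exact ha hft
    rcases htb.eq_or_lt with rfl | htb
    · exact hb hft
    simpa using (Set.ext_iff.1 hZ t).1 ⟨⟨hat, htb⟩, hft⟩
  | insert m s hs ih =>
    intro b hab hb hZ hsign
    have hmem : ∀ t, t ∈ Ioo a b ∧ f t = 0 ↔ t = m ∨ t ∈ s := by
      simpa [Set.ext_iff] using hZ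
    obtain ⟨⟨ham, hmb⟩, -⟩ := (hmem m).2 (Or.inl rfl)
    obtain ⟨l, hl, hlm⟩ := exists_between ((Finset.max'_lt_iff (insert a s)
      (Finset.insert_nonempty a s) (x := m)).2 (by simpa [ham] using hs))
    have hlt : ∀ x ∈ insert a s, x < l := fun x hx ↦ (Finset.le_max' _ x hx).trans_lt hl
    have hal : a < l := hlt a (Finset.mem_insert_self a s)
    have hzero : ∀ t ∈ Ioo a b, f t = 0 → t = m ∨ t < l := fun t ht hft ↦
      ((hmem t).1 ⟨ht, hft⟩).imp_right fun hts ↦ hlt t (Finset.mem_insert_of_mem hts)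
    have hL : ∀ t ∈ Ico l m, f t ≠ 0 := fun t ht hft ↦ by
      rcases hzero t ⟨hal.trans_le ht.1, ht.2.trans hmb⟩ hft with rfl | h <;> linarith [ht.1, ht.2]
    have hR : ∀ t ∈ Ioc m b, f t ≠ 0 := fun t ht hft ↦ by
      rcases ht.2.eq_or_lt with rfl | htb
      · exact hb hft
      rcases hzero t ⟨ham.trans ht.1, htb⟩ hft with rfl | h <;> linarith [ht.1]
    have hlb : f l * f b < 0 := (hsign m (Finset.mem_insert_self m s)).mul_neg hf hlm hmb hL hR
    have hZl : {t ∈ Ioo a l | f t = 0} = ↑s := by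
      ext t
      simp only [mem_ofPred_eq, Finset.mem_coe]
      refine ⟨fun ⟨⟨hat, htl⟩, hft⟩ ↦ ?_, fun hts ↦ ?_⟩
      · refine ((hmem t).1 ⟨⟨hat, htl.trans (hlm.trans hmb)⟩, hft⟩).resolve_left ?_
        rintro rfl
        exact (htl.trans hlm).false
      · obtain ⟨⟨hat, -⟩, hft⟩ := (hmem t).2 (Or.inr hts)
        exact ⟨⟨hat, hlt t (Finset.mem_insert_of_mem hts)⟩, hft⟩
    have ih' := ih l hal (hL l ⟨le_rfl, hlm⟩) hZl fun t ht ↦ hsign t (Finset.mem_insert_of_mem ht)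
    rw [Finset.card_insert_of_notMem fun hm ↦ (hs m hm).false, Nat.even_add_one, ih']
    exact not_pos_mul_iff_of_mul_neg ha hlb

/-- A continuous function which is negative at both `0` and `T > 0` and whose
zeros in `(0,T)` are finitely many transverse (sign-changing) crossings has an
even number of such zeros. -/
theorem even_sign_changes
    (f : ℝ → ℝ) (hf : Continuous f) (T : ℝ) (hT : 0 < T)
    (h0 : f 0 < 0) (hT' : f T < 0)
    (hfin : {t ∈ Set.Ioo 0 T | f t = 0}.Finite)
    (hsign : ∀ t₀ ∈ {t ∈ Set.Ioo 0 T | f t = 0}, ∃ δ > (0 : ℝ),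
      ∀ s s', t₀ - δ < s → s < t₀ → t₀ < s' → s' < t₀ + δ →
        f s * f s' < 0) :
    Even {t ∈ Set.Ioo 0 T | f t = 0}.ncard := by
  rw [Set.ncard_eq_toFinset_card _ hfin]
  exact (even_card_zeros_iff_zero_lt_mul hf h0.ne _ T hT hT'.ne hfin.coe_toFinset.symm
    fun t ht ↦ hsign t (hfin.mem_toFinset.1 ht)).2 (mul_pos_of_neg_of_neg h0 hT')
end
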